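/- Let n ≥ 1. There exists a constant c₁ > 0 depending only on n with the following property: for every smooth, strictly convex body K in ℝ^{n+1} with positive support function, the normalized body K̄ = (K − c(K))/(⨍ h̃ dθ) satisfies h_{K̄}(x) ≤ 1/c₁ for all x ∈ S^n; in particular the diameter of K̄ ∪ B is at most 2(1 + 1/c₁), where B is the closed unit ball. -/

import Mathlib

open MeasureTheory Metric Real
open scoped InnerProductSpace ENNReal Topology

noncomputable section

/-- Euclidean space `ℝ^{n+1}`. -/
abbrev Eu (n : ℕ) : Type := EuclideanSpace ℝ (Fin (n + 1))

/-- The unit sphere `S^n ⊆ ℝ^{n+1}` as a subtype. -/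
abbrev Sph (n : ℕ) : Type := Metric.sphere (0 : Eu n) 1

/-- The spherical Lebesgue (surface) measure on `S^n`. -/
def sphMeas (n : ℕ) : Measure (Sph n) := (volume : Measure (Eu n)).toSphere

/-- The support function of a set `K ⊆ ℝ^{n+1}`. -/
def sfn {n : ℕ} (K : Set (Eu n)) (z : Eu n) : ℝ :=
  sSup ((fun y => ⟪z, y⟫_ℝ) '' K)

/-- The Hessian endomorphism `A(x) = D(∇ h_K)(x)`. -/
def hessA {n : ℕ} (K : Set (Eu n)) (x : Eu n) : Eu n →L[ℝ] Eu n :=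
  fderiv ℝ (gradient (sfn K)) x

/-- The rank-one endomorphism `x ⊗ x : v ↦ ⟨v, x⟩ x`. -/
def tens {n : ℕ} (x : Eu n) : Eu n →L[ℝ] Eu n :=
  (innerSL ℝ x).smulRight x

/-- `det (A(x) + x ⊗ x)`, the reciprocal Gauss curvature `1/𝒦` at `x ∈ S^n`. -/
def rK {n : ℕ} (K : Set (Eu n)) (x : Eu n) : ℝ :=
  LinearMap.det ((hessA K x + tens x : Eu n →L[ℝ] Eu n) : Eu n →ₗ[ℝ] Eu n)

/-- `K` is a smooth, strictly convex body with positive support function. -/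
structure IsSmoothConvexBody {n : ℕ} (K : Set (Eu n)) : Prop where
  compact : IsCompact K
  convex : Convex ℝ K
  interior_nonempty : (interior K).Nonempty
  pos : ∀ x : Sph n, 0 < sfn K x
  smooth : ContDiffOn ℝ (⊤ : ℕ∞) (sfn K) {(0 : Eu n)}ᶜ
  posdef : ∀ x : Sph n, ∀ v : Eu n, v ≠ 0 →
    0 < ⟪(hessA K (x : Eu n) + tens (x : Eu n)) v, v⟫_ℝ

/-- The density `h·det(A + x⊗x)` of the measure `dV` with respect to `dθ`. -/
def dens {n : ℕ} (K : Set (Eu n)) (x : Eu n) : ℝ := sfn K x * rK K x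

/-- The centroid-type point `c(K) = (∫ ∇h_K dV)/(∫ dV)`. -/
def cK {n : ℕ} (K : Set (Eu n)) : Eu n :=
  (∫ x : Sph n, dens K x ∂sphMeas n)⁻¹ •
    ∫ x : Sph n, dens K x • gradient (sfn K) x ∂sphMeas n

/-- The support function of the translated body `K - c(K)`. -/
def tsfn {n : ℕ} (K : Set (Eu n)) (x : Eu n) : ℝ := sfn K x - ⟪x, cK K⟫_ℝ



/-!
Since `∇h` maps the sphere into `K` and `c(K)` is an average of `∇h` with positive weights
`h · det (A + x ⊗ x)`, the point `c(K)` lies in `K`. Let `y₀ ∈ K` be farthest from `c(K)`, at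
distance `R`. Then `h̃ ≤ R` on the sphere, while `h̃(x) ≥ max ⟪x, y₀ - c(K)⟫ 0` because both `y₀`
and `c(K)` lie in `K`. Averaging, `⨍ h̃ dθ ≥ R · ⨍ max ⟪x, e⟫ 0 dθ` for a unit vector `e`, and
this mean is at least its minimum `c₁ > 0` over the compact unit sphere. Hence
`h̃ ≤ R ≤ (⨍ h̃ dθ) / c₁`, and every point of `K̄` has norm at most `1 / c₁`.
-/

section DetPos

variable {E : Type*} [NormedAddCommGroup E] [InnerProductSpace ℝ E] [FiniteDimensional ℝ E]

lemma ContinuousLinearMap.det_ne_zero_of_forall_inner_pos {T : E →L[ℝ] E}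
    (h : ∀ v : E, v ≠ 0 → 0 < ⟪T v, v⟫_ℝ) : T.det ≠ 0 := by
  refine ((LinearMap.isUnit_iff_isUnit_det _).mp
    ((LinearMap.isUnit_iff_ker_eq_bot _).mpr ?_)).ne_zero
  refine LinearMap.ker_eq_bot'.mpr fun v hv => by_contra fun hv0 => ?_
  simpa [show T v = 0 from hv] using h v hv0

/- The form `⟪S v, v⟫` stays positive definite along the segment `S t = (1 - t) • 1 + t • T`,
so `det (S t)` never vanishes and keeps the sign of `det 1 = 1`. -/
lemma ContinuousLinearMap.det_pos_of_forall_inner_pos {T : E →L[ℝ] E}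
    (h : ∀ v : E, v ≠ 0 → 0 < ⟪T v, v⟫_ℝ) : 0 < T.det := by
  let S : ℝ → E →L[ℝ] E := fun t => (1 - t) • 1 + t • T
  have hS : ∀ t ∈ Set.Icc (0 : ℝ) 1, (S t).det ≠ 0 := by
    rintro t ⟨ht0, ht1⟩
    refine det_ne_zero_of_forall_inner_pos fun v hv => ?_
    have hvv : 0 < ⟪v, v⟫_ℝ := real_inner_self_pos.mpr hv
    have hSv : ⟪S t v, v⟫_ℝ = (1 - t) * ⟪v, v⟫_ℝ + t * ⟪T v, v⟫_ℝ := by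
      simp [S, inner_add_left, real_inner_smul_left]
    rcases ht0.eq_or_lt with rfl | ht0
    · simpa [hSv] using hvv
    · rw [hSv]; nlinarith [h v hv]
  have hcont : Continuous fun t => (S t).det :=
    ContinuousLinearMap.continuous_det.comp (by fun_prop)
  by_contra hle
  obtain ⟨t, ht, h0⟩ := intermediate_value_Icc' zero_le_one hcont.continuousOn
    (show (0 : ℝ) ∈ Set.Icc (S 1).det (S 0).det from
      ⟨by simpa [S] using not_lt.mp hle, by simp [S, ContinuousLinearMap.det]⟩)
  exact hS t ht h0

end DetPos

section SupportFunction

variable {n : ℕ} {K : Set (Eu n)}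

lemma inner_le_sfn (hK : IsCompact K) {y : Eu n} (hy : y ∈ K) (z : Eu n) :
    ⟪z, y⟫_ℝ ≤ sfn K z :=
  le_csSup (hK.image (continuous_const.inner continuous_id)).bddAbove (Set.mem_image_of_mem _ hy)

lemma sfn_le (hne : K.Nonempty) {z : Eu n} {a : ℝ} (h : ∀ y ∈ K, ⟪z, y⟫_ℝ ≤ a) :
    sfn K z ≤ a :=
  csSup_le (hne.image _) (Set.forall_mem_image.mpr h)

lemma mem_of_forall_inner_le_sfn (hK : IsCompact K) (hconv : Convex ℝ K) (hne : K.Nonempty)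
    {p : Eu n} (h : ∀ z : Eu n, ⟪z, p⟫_ℝ ≤ sfn K z) : p ∈ K := by
  by_contra hp
  obtain ⟨f, u, hfu, hup⟩ := geometric_hahn_banach_closed_point hconv hK.isClosed hp
  have hz : ∀ w, ⟪(InnerProductSpace.toDual ℝ (Eu n)).symm f, w⟫_ℝ = f w :=
    fun w => InnerProductSpace.toDual_symm_apply
  have := (h _).trans (sfn_le hne fun y hy => (hz y).trans_le (hfu y hy).le)
  rw [hz] at this
  linarith

lemma sfn_add_smul_le (hK : IsCompact K) (hne : K.Nonempty) (x u : Eu n) {t : ℝ} (ht : 0 ≤ t) :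
    sfn K (x + t • u) ≤ sfn K x + t * sfn K u :=
  sfn_le hne fun y hy => by
    rw [inner_add_left, real_inner_smul_left]
    exact add_le_add (inner_le_sfn hK hy x) (mul_le_mul_of_nonneg_left (inner_le_sfn hK hy u) ht)

/- The directional derivative is the limit of the slopes `(h (x + t • u) - h x) / t` as `t → 0⁺`,
each of which is at most `h u` by sublinearity. -/
lemma fderiv_sfn_le (hK : IsCompact K) (hne : K.Nonempty) {x : Eu n}
    (hd : DifferentiableAt ℝ (sfn K) x) (u : Eu n) : fderiv ℝ (sfn K) x u ≤ sfn K u := by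
  have hline : HasDerivAt (fun t : ℝ => x + t • u) u 0 := by
    simpa using ((hasDerivAt_id (0 : ℝ)).smul_const u).const_add x
  have hφ : HasDerivAt (fun t : ℝ => sfn K (x + t • u)) (fderiv ℝ (sfn K) x u) 0 :=
    hd.hasFDerivAt.comp_hasDerivAt_of_eq 0 hline (by simp)
  refine le_of_tendsto ((hasDerivAt_iff_tendsto_slope.mp hφ).mono_left (nhdsGT_le_nhdsNE 0)) ?_
  filter_upwards [self_mem_nhdsWithin] with t (ht : 0 < t)
  rw [slope_def_field, zero_smul, add_zero, sub_zero, div_le_iff₀ ht]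
  linarith [sfn_add_smul_le hK hne x u ht.le]

lemma gradient_sfn_mem (hK : IsCompact K) (hconv : Convex ℝ K) (hne : K.Nonempty) {x : Eu n}
    (hd : DifferentiableAt ℝ (sfn K) x) : gradient (sfn K) x ∈ K :=
  mem_of_forall_inner_le_sfn hK hconv hne fun z => by
    rw [real_inner_comm, gradient, InnerProductSpace.toDual_symm_apply]
    exact fderiv_sfn_le hK hne hd z

lemma sfn_sub_inner_le (hne : K.Nonempty) {c : Eu n} {R : ℝ} (hR : ∀ y ∈ K, ‖y - c‖ ≤ R)
    {x : Eu n} (hx : ‖x‖ ≤ 1) : sfn K x - ⟪x, c⟫_ℝ ≤ R := by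
  rw [sub_le_iff_le_add']
  refine sfn_le hne fun y hy => ?_
  have : ⟪x, y - c⟫_ℝ ≤ ‖y - c‖ :=
    (real_inner_le_norm x _).trans (mul_le_of_le_one_left (norm_nonneg _) hx)
  rw [inner_sub_right] at this
  linarith [hR y hy]

lemma max_inner_sub_le_sfn_sub_inner (hK : IsCompact K) {c y : Eu n} (hc : c ∈ K) (hy : y ∈ K)
    (x : Eu n) : max ⟪x, y - c⟫_ℝ 0 ≤ sfn K x - ⟪x, c⟫_ℝ :=
  max_le (by rw [inner_sub_right]; linarith [inner_le_sfn hK hy x])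
    (sub_nonneg.mpr (inner_le_sfn hK hc x))

end SupportFunction

instance (n : ℕ) : IsFiniteMeasure (sphMeas n) := by
  unfold sphMeas; infer_instance

instance (n : ℕ) : (sphMeas n).IsOpenPosMeasure := by
  unfold sphMeas; infer_instance

instance (n : ℕ) : Nonempty (Sph n) :=
  (NormedSpace.sphere_nonempty.mpr zero_le_one).to_subtype

lemma Continuous.integrable_sphMeas {n : ℕ} {F : Type*} [NormedAddCommGroup F] {f : Sph n → F}
    (hf : Continuous f) : Integrable f (sphMeas n) :=
  hf.integrable_of_hasCompactSupport (.of_compactSpace f)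

lemma ContinuousOn.comp_sph {n : ℕ} {X : Type*} [TopologicalSpace X] {f : Eu n → X}
    (hf : ContinuousOn f {0}ᶜ) : Continuous fun x : Sph n => f x :=
  hf.comp_continuous continuous_subtype_val ne_zero_of_mem_unit_sphere

namespace IsSmoothConvexBody

variable {n : ℕ} {K : Set (Eu n)}

lemma nonempty (hK : IsSmoothConvexBody K) : K.Nonempty :=
  hK.interior_nonempty.mono interior_subset

lemma differentiableAt (hK : IsSmoothConvexBody K) {x : Eu n} (hx : x ≠ 0) :
    DifferentiableAt ℝ (sfn K) x :=
  (hK.smooth.contDiffAt (isOpen_compl_singleton.mem_nhds hx)).differentiableAt (by simp)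

lemma contDiffOn_gradient (hK : IsSmoothConvexBody K) :
    ContDiffOn ℝ (⊤ : ℕ∞) (gradient (sfn K)) {0}ᶜ :=
  (InnerProductSpace.toDual ℝ (Eu n)).symm.contDiff.comp_contDiffOn
    (hK.smooth.fderiv_of_isOpen isOpen_compl_singleton (by simp))

lemma continuousOn_dens (hK : IsSmoothConvexBody K) : ContinuousOn (dens K) {0}ᶜ := by
  have hA : ContinuousOn (hessA K) {0}ᶜ :=
    hK.contDiffOn_gradient.continuousOn_fderiv_of_isOpen isOpen_compl_singleton (by simp)
  have hT : Continuous (tens (n := n)) := by unfold tens; fun_prop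
  exact hK.smooth.continuousOn.mul
    (ContinuousLinearMap.continuous_det.comp_continuousOn (hA.add hT.continuousOn))

lemma dens_pos (hK : IsSmoothConvexBody K) (x : Sph n) : 0 < dens K x :=
  mul_pos (hK.pos x) (ContinuousLinearMap.det_pos_of_forall_inner_pos (hK.posdef x))

lemma integral_dens_pos (hK : IsSmoothConvexBody K) : 0 < ∫ x : Sph n, dens K x ∂sphMeas n := by
  obtain ⟨x⟩ : Nonempty (Sph n) := inferInstance
  exact hK.continuousOn_dens.comp_sph.integral_pos_of_hasCompactSupport_nonneg_nonzero
    (.of_compactSpace _) (fun x => (hK.dens_pos x).le) (hK.dens_pos x).ne'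

lemma gradient_mem (hK : IsSmoothConvexBody K) (x : Sph n) : gradient (sfn K) x ∈ K :=
  gradient_sfn_mem hK.compact hK.convex hK.nonempty
    (hK.differentiableAt (ne_zero_of_mem_unit_sphere x))

/- `c(K)` is a weighted mean of the points `∇h(x) ∈ K` with positive weights, so testing against
any direction `z` cannot exceed `h(z)`. -/
lemma inner_cK_le_sfn (hK : IsSmoothConvexBody K) (z : Eu n) : ⟪z, cK K⟫_ℝ ≤ sfn K z := by
  have hd : Continuous fun x : Sph n => dens K x := hK.continuousOn_dens.comp_sph
  have hdg : Continuous fun x : Sph n => dens K x • gradient (sfn K) x :=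
    hd.smul hK.contDiffOn_gradient.continuousOn.comp_sph
  have hle : ∫ x : Sph n, ⟪z, dens K x • gradient (sfn K) x⟫_ℝ ∂sphMeas n ≤
      ∫ x : Sph n, sfn K z * dens K x ∂sphMeas n := by
    refine integral_mono (by fun_prop : Continuous _).integrable_sphMeas
      (hd.const_mul _).integrable_sphMeas fun x => ?_
    rw [real_inner_smul_right, mul_comm]
    exact mul_le_mul_of_nonneg_right (inner_le_sfn hK.compact (hK.gradient_mem x) z)
      (hK.dens_pos x).le
  rw [integral_inner hdg.integrable_sphMeas, integral_const_mul] at hle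
  rw [cK, real_inner_smul_right, inv_mul_le_iff₀ hK.integral_dens_pos, mul_comm]
  exact hle

lemma cK_mem (hK : IsSmoothConvexBody K) : cK K ∈ K :=
  mem_of_forall_inner_le_sfn hK.compact hK.convex hK.nonempty hK.inner_cK_le_sfn

end IsSmoothConvexBody

def posPartMean (n : ℕ) (w : Eu n) : ℝ := ⨍ x : Sph n, max ⟪(x : Eu n), w⟫_ℝ 0 ∂sphMeas n

lemma posPartMean_smul {n : ℕ} {r : ℝ} (hr : 0 ≤ r) (w : Eu n) :
    posPartMean n (r • w) = r * posPartMean n w := by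
  have hmax : ∀ t : ℝ, max (r * t) 0 = r * max t 0 := fun t => by
    rw [mul_max_of_nonneg _ _ hr, mul_zero]
  simp_rw [posPartMean, average_eq, real_inner_smul_right, hmax, integral_const_mul, smul_eq_mul]
  ring

lemma continuous_posPartMean (n : ℕ) : Continuous (posPartMean n) := by
  have h : Continuous fun w : Eu n => ∫ x in Set.univ, max ⟪(x : Eu n), w⟫_ℝ 0 ∂sphMeas n :=
    continuous_parametric_integral_of_continuous (by fun_prop) isCompact_univ
  rw [Measure.restrict_univ] at h
  exact (h.const_smul ((sphMeas n).real Set.univ)⁻¹).congr fun w =>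
    (average_eq (μ := sphMeas n) _).symm

lemma posPartMean_pos {n : ℕ} {e : Eu n} (he : e ∈ sphere (0 : Eu n) 1) : 0 < posPartMean n e := by
  have hee : 0 < ⟪e, e⟫_ℝ := real_inner_self_pos.mpr (ne_zero_of_mem_unit_sphere ⟨e, he⟩)
  rw [posPartMean, average_eq, smul_eq_mul]
  refine mul_pos (inv_pos.mpr ?_) ?_
  · exact ENNReal.toReal_pos (isOpen_univ.measure_ne_zero _ Set.univ_nonempty)
      (measure_ne_top _ _)
  · exact (Continuous.integral_pos_of_hasCompactSupport_nonneg_nonzero (x := ⟨e, he⟩)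
      (by fun_prop) (.of_compactSpace _) (fun _ => le_max_right _ _) (by simpa using hee.ne'))

lemma exists_pos_mul_norm_le_posPartMean (n : ℕ) :
    ∃ c > 0, ∀ w : Eu n, c * ‖w‖ ≤ posPartMean n w := by
  obtain ⟨e₀, he₀, hmin⟩ := (isCompact_sphere (0 : Eu n) 1).exists_isMinOn
    (NormedSpace.sphere_nonempty.mpr zero_le_one) (continuous_posPartMean n).continuousOn
  refine ⟨posPartMean n e₀, posPartMean_pos he₀, fun w => ?_⟩
  rcases eq_or_ne w 0 with rfl | hw
  · simp [posPartMean]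
  have hunit : ‖w‖⁻¹ • w ∈ sphere (0 : Eu n) 1 := by simp [norm_smul, hw]
  calc posPartMean n e₀ * ‖w‖ ≤ posPartMean n (‖w‖⁻¹ • w) * ‖w‖ :=
        mul_le_mul_of_nonneg_right (hmin hunit) (norm_nonneg w)
    _ = posPartMean n w := by
        rw [posPartMean_smul (by positivity), mul_comm, ← mul_assoc,
          mul_inv_cancel₀ (norm_ne_zero_iff.mpr hw), one_mul]

lemma IsSmoothConvexBody.posPartMean_le_average_tsfn {n : ℕ} {K : Set (Eu n)}
    (hK : IsSmoothConvexBody K) {y : Eu n} (hy : y ∈ K) :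
    posPartMean n (y - cK K) ≤ ⨍ x : Sph n, tsfn K x ∂sphMeas n := by
  have ht : Continuous fun x : Sph n => tsfn K x :=
    hK.smooth.continuousOn.comp_sph.sub (by fun_prop)
  rw [posPartMean, average_eq, average_eq, smul_eq_mul, smul_eq_mul]
  exact mul_le_mul_of_nonneg_left (integral_mono (by fun_prop : Continuous _).integrable_sphMeas
    ht.integrable_sphMeas fun x => max_inner_sub_le_sfn_sub_inner hK.compact hK.cK_mem hy x)
    (by positivity)

lemma div_le_one_div_of_mul_le {a c R : ℝ} (hc : 0 < c) (hR : 0 ≤ R) (h : c * R ≤ a) :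
    R / a ≤ 1 / c := by
  rcases (mul_nonneg hc.le hR).trans h |>.eq_or_lt with rfl | ha
  · simpa using hc.le
  · rw [div_le_div_iff₀ ha hc]
    linarith

lemma Metric.diam_union_closedBall_le {X : Type*} [PseudoMetricSpace X] {s : Set X} {x : X}
    {ρ r : ℝ} (hρ : 0 ≤ ρ) (hr : 0 ≤ r) (hs : s ⊆ closedBall x r) :
    diam (s ∪ closedBall x ρ) ≤ 2 * (ρ + r) :=
  (diam_mono (Set.union_subset (hs.trans (closedBall_subset_closedBall (by linarith)))
    (closedBall_subset_closedBall (by linarith))) isBounded_closedBall).trans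
    (diam_closedBall (by linarith))

theorem normalized_body_bounded_general (n : ℕ) :
    ∃ c₁ : ℝ, 0 < c₁ ∧
      ∀ K : Set (Eu n), IsSmoothConvexBody K →
        (∀ x : Sph n,
          tsfn K (x : Eu n) / (⨍ y : Sph n, tsfn K (y : Eu n) ∂sphMeas n) ≤ 1 / c₁) ∧
        Metric.diam
            (((fun y : Eu n =>
                (⨍ y' : Sph n, tsfn K (y' : Eu n) ∂sphMeas n)⁻¹ • (y - cK K)) '' K) ∪
              Metric.closedBall (0 : Eu n) 1) ≤ 2 * (1 + 1 / c₁) := by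
  obtain ⟨c₁, hc₁, hmean⟩ := exists_pos_mul_norm_le_posPartMean n
  refine ⟨c₁, hc₁, fun K hK => ?_⟩
  obtain ⟨y₀, hy₀, hmax⟩ := hK.compact.exists_isMaxOn hK.nonempty
    (f := fun y => ‖y - cK K‖) (by fun_prop)
  set a := ⨍ y : Sph n, tsfn K (y : Eu n) ∂sphMeas n
  set R := ‖y₀ - cK K‖
  have hR : ∀ y ∈ K, ‖y - cK K‖ ≤ R := fun y hy => hmax hy
  have hRa : c₁ * R ≤ a := (hmean _).trans (hK.posPartMean_le_average_tsfn hy₀)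
  have ha : 0 ≤ a := (mul_nonneg hc₁.le (norm_nonneg _)).trans hRa
  -- If `K` is a point then `R = a = 0`, and both bounds hold because `x / 0 = 0`.
  have hbound : R / a ≤ 1 / c₁ := div_le_one_div_of_mul_le hc₁ (norm_nonneg _) hRa
  refine ⟨fun x => (div_le_div_of_nonneg_right ?_ ha).trans hbound,
    diam_union_closedBall_le zero_le_one (by positivity) ?_⟩
  · exact sfn_sub_inner_le hK.nonempty hR (norm_eq_of_mem_sphere x).le
  · rintro _ ⟨y, hy, rfl⟩
    rw [mem_closedBall_zero_iff, norm_smul, norm_inv, Real.norm_of_nonneg ha, ← div_eq_inv_mul]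
    exact (div_le_div_of_nonneg_right (hR y hy) ha).trans hbound

/-- There is `c₁ = c₁(n) > 0` such that the normalized body
`K̄ = (K − c(K))/(⨍ h̃ dθ)` satisfies `h_{K̄} ≤ 1/c₁` on `S^n`; in particular
`diam (K̄ ∪ B) ≤ 2 (1 + 1/c₁)`. -/
theorem normalized_body_bounded (n : ℕ) (hn : 1 ≤ n) :
    ∃ c₁ : ℝ, 0 < c₁ ∧
      ∀ K : Set (Eu n), IsSmoothConvexBody K →
        (∀ x : Sph n,
          tsfn K (x : Eu n) / (⨍ y : Sph n, tsfn K (y : Eu n) ∂sphMeas n) ≤ 1 / c₁) ∧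
        Metric.diam
            (((fun y : Eu n =>
                (⨍ y' : Sph n, tsfn K (y' : Eu n) ∂sphMeas n)⁻¹ • (y - cK K)) '' K) ∪
              Metric.closedBall (0 : Eu n) 1) ≤ 2 * (1 + 1 / c₁) :=
  normalized_body_bounded_general n
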